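/- Assume for k = 1,2 that C₀⟨x⟩^{2(M_k+1)} − C₁ ≤ V_k(t,x) ≤ C₂⟨x⟩^{2(M_k+1)} (M_k ≥ 0, C₀ > 0), |∂_x^α V_k| ≤ C_α⟨x⟩^{2(M_k+1)} for |α| ≥ 1, |A_j^{(k)}| ≤ C⟨x⟩^{M_k+1−δ} for some δ > 0, and |∂_x^α A_j^{(k)}| ≤ C_α⟨x⟩^{M_k+1} for |α| ≥ 1, and that with M₀ = min(M₁,M₂), |W₁₂(t,x)| ≤ C⟨x⟩^{2(M₀+1)−δ} for some δ > 0 and |∂_x^α W₁₂(t,x)| ≤ C_α⟨x⟩^{2(M₀+1)} for |α| ≥ 1. Then there exist constants μ* ≥ 0 and C₀* > 0 such that μ* + Re h̃_s(t,z,ζ) ≥ C₀*(⟨ζ⟩² + Φ(z)²) for all (t,z,ζ) ∈ [0,T]×ℝ^{4d}×ℝ^{4d}. -/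

import Mathlib

open MeasureTheory Real Set

noncomputable section

namespace Schro

/-- `ℝ^d` with the Euclidean norm. -/
abbrev Ed (d : ℕ) : Type := EuclideanSpace ℝ (Fin d)

variable {ι : Type} [Fintype ι] [DecidableEq ι]

/-- The Japanese bracket `⟨x⟩ = (1+|x|²)^{1/2}`. -/
def jap (x : EuclideanSpace ℝ ι) : ℝ := Real.sqrt (1 + ‖x‖ ^ 2)

/-- Partial derivative in the `i`-th coordinate direction. -/
def pd {F : Type*} [NormedAddCommGroup F] [NormedSpace ℝ F]
    (i : ι) (f : EuclideanSpace ℝ ι → F) : EuclideanSpace ℝ ι → F :=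
  fun x => fderiv ℝ f x (EuclideanSpace.single i 1)

def pdIter {F : Type*} [NormedAddCommGroup F] [NormedSpace ℝ F]
    (i : ι) : ℕ → (EuclideanSpace ℝ ι → F) → (EuclideanSpace ℝ ι → F)
  | 0 => id
  | n+1 => fun f => pd i (pdIter i n f)

/-- Iterated partial derivative `∂_x^α` for a multi-index `α`. -/
def mpd {F : Type*} [NormedAddCommGroup F] [NormedSpace ℝ F]
    (α : ι → ℕ) (f : EuclideanSpace ℝ ι → F) : EuclideanSpace ℝ ι → F :=
  (Finset.univ : Finset ι).toList.foldr (fun i g => pdIter i (α i) g) f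

/-- The length `|α|` of a multi-index. -/
def mdeg (α : ι → ℕ) : ℕ := ∑ i, α i

/-- `ℝ^{4d}`, the configuration space of four particles. -/
abbrev E4 (d : ℕ) : Type := EuclideanSpace ℝ (Fin 4 × Fin d)

/-- The position `x^{(k)}` of the `k`-th particle. -/
def comp4 {d : ℕ} (k : Fin 4) (z : E4 d) : Ed d := WithLp.toLp 2 (fun j => z (k, j))

/-- The exponents `(M₁, M₂, M₃, M₄) = (M₁, M₂, 0, 0)`. -/
def Mk (M1 M2 : ℝ) : Fin 4 → ℝ := ![M1, M2, 0, 0]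

/-- The weight family of the 4-particle space `B'^a`: `⟨x^{(k)}⟩^{2a(M_k+1)}`. -/
def w4 (d : ℕ) (Ms : Fin 4 → ℝ) : ℕ → Fin 4 → E4 d → ℝ :=
  fun n k z => jap (comp4 k z) ^ (2*(n:ℝ)*(Ms k + 1))

/-- Formal transpose of the momentum operator of the `k`-th particle. -/
def PjT4 {d : ℕ} (A : ℝ → Ed d → Fin d → ℝ) (t : ℝ) (k : Fin 4) (j : Fin d)
    (ψ : E4 d → ℂ) : E4 d → ℂ :=
  fun z => Complex.I * pd (k, j) ψ z - (A t (comp4 k z) j : ℂ) * ψ z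

/-- Formal transpose of the 4-particle Hamiltonian (1.4). -/
def HT4 {d : ℕ} (m : Fin 4 → ℝ) (V : Fin 4 → ℝ → Ed d → ℝ)
    (A : Fin 4 → ℝ → Ed d → Fin d → ℝ) (W : Fin 4 → Fin 4 → ℝ → Ed d → ℝ)
    (t : ℝ) (ψ : E4 d → ℂ) : E4 d → ℂ :=
  fun z =>
    (∑ k, ((1/(2*m k) : ℂ) * (∑ j, PjT4 (A k) t k j (PjT4 (A k) t k j ψ) z)
        + (V k t (comp4 k z) : ℂ) * ψ z))
    + (∑ p : Fin 4 × Fin 4, if p.1 < p.2 then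
        (W p.1 p.2 t (comp4 p.1 z - comp4 p.2 z) : ℂ) * ψ z else 0)

/-- The single-particle symbol `h_k(t,x,ξ) = (1/2m_k)|ξ − A^{(k)}(t,x)|² + V_k(t,x)`. -/
def hk {d : ℕ} (m : ℝ) (V : ℝ → Ed d → ℝ) (A : ℝ → Ed d → Fin d → ℝ)
    (t : ℝ) (x ξ : Ed d) : ℝ :=
  (1/(2*m)) * (∑ j, (ξ j - A t x j)^2) + V t x

/-- `l_k(x,ξ) = (1/2m_k)|ξ|² + ⟨x⟩²`. -/
def lk {d : ℕ} (m : ℝ) (x ξ : Ed d) : ℝ := (1/(2*m)) * ‖ξ‖^2 + jap x ^ 2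

/-- The symbol `h̃(t,z,ζ)` of (5.3). -/
def htil {d : ℕ} (m : Fin 4 → ℝ) (V : Fin 4 → ℝ → Ed d → ℝ)
    (A : Fin 4 → ℝ → Ed d → Fin d → ℝ) (W12 : ℝ → Ed d → ℝ)
    (t : ℝ) (z ζ : E4 d) : ℝ :=
  hk (m 0) (V 0) (A 0) t (comp4 0 z) (comp4 0 ζ)
  + hk (m 1) (V 1) (A 1) t (comp4 1 z) (comp4 1 ζ)
  + W12 t (comp4 0 z - comp4 1 z)
  + lk (m 2) (comp4 2 z) (comp4 2 ζ) + lk (m 3) (comp4 3 z) (comp4 3 ζ)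

/-- The symbol `h̃_s = h̃ + i Σ_{k=1,2} (1/2m_k) ∇·A^{(k)}(t,x^{(k)})` of (5.5). -/
def htilS {d : ℕ} (m : Fin 4 → ℝ) (V : Fin 4 → ℝ → Ed d → ℝ)
    (A : Fin 4 → ℝ → Ed d → Fin d → ℝ) (W12 : ℝ → Ed d → ℝ)
    (t : ℝ) (z ζ : E4 d) : ℂ :=
  (htil m V A W12 t z ζ : ℝ) + Complex.I *
    (((1/(2*m 0)) * ∑ j, pd j (fun y => A 0 t y j) (comp4 0 z)
      + (1/(2*m 1)) * ∑ j, pd j (fun y => A 1 t y j) (comp4 1 z) : ℝ) : ℂ)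

/-- `Φ(z) = Σ_{k=1,2} ⟨x^{(k)}⟩^{M_k+1} + Σ_{k=3,4} ⟨x^{(k)}⟩` of (5.8). -/
def Phi {d : ℕ} (M1 M2 : ℝ) (z : E4 d) : ℝ :=
  jap (comp4 0 z) ^ (M1+1) + jap (comp4 1 z) ^ (M2+1)
  + jap (comp4 2 z) + jap (comp4 3 z)

/-!
The kinetic term gives `|ξ - A|² ≥ |ξ|²/2 - |A|²`, and `|A|²` grows strictly slower than the
confining potential; likewise `|W₁₂(x¹ - x²)| ≲ ⟨x¹⟩^p + ⟨x²⟩^p` with `p` below both confinement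
exponents. Each such lower-order power is absorbed into a fraction of the confinement at the cost
of a constant (`K a^p ≤ ε a^q + C_ε` for `a ≥ 1`, `p < q`), which leaves a positive multiple of
`|ζ|² + Σ_k ⟨x^{(k)}⟩^{2(M_k+1)}`, and that controls `⟨ζ⟩² + Φ(z)²`.
-/

section Bracket

variable {κ : Type} [Fintype κ]

lemma one_le_jap (x : EuclideanSpace ℝ κ) : 1 ≤ jap x :=
  Real.one_le_sqrt.mpr (le_add_of_nonneg_right (sq_nonneg _))

lemma jap_nonneg (x : EuclideanSpace ℝ κ) : 0 ≤ jap x :=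
  zero_le_one.trans (one_le_jap x)

lemma jap_sq (x : EuclideanSpace ℝ κ) : jap x ^ 2 = 1 + ‖x‖ ^ 2 :=
  Real.sq_sqrt (by positivity)

lemma jap_rpow_sq (x : EuclideanSpace ℝ κ) (r : ℝ) : (jap x ^ r) ^ 2 = jap x ^ (2 * r) := by
  rw [← Real.rpow_mul_natCast (jap_nonneg x), mul_comm]
  norm_num

lemma jap_sub_le (x y : EuclideanSpace ℝ κ) : jap (x - y) ≤ jap x + jap y := by
  have hx : ‖x‖ ≤ jap x := Real.le_sqrt_of_sq_le (by linarith)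
  have hy : ‖y‖ ≤ jap y := Real.le_sqrt_of_sq_le (by linarith)
  have hxy : ‖x - y‖ ^ 2 ≤ (‖x‖ + ‖y‖) ^ 2 := by gcongr; exact norm_sub_le x y
  refine Real.sqrt_le_iff.mpr ⟨add_nonneg (jap_nonneg x) (jap_nonneg y), ?_⟩
  nlinarith [jap_sq x, jap_sq y, mul_le_mul hx hy (norm_nonneg y) (jap_nonneg x)]

end Bracket

lemma _root_.Real.add_rpow_le_two_rpow_mul_rpow_add_rpow {a b p : ℝ} (ha : 0 ≤ a) (hb : 0 ≤ b)
    (hp : 0 ≤ p) : (a + b) ^ p ≤ 2 ^ p * (a ^ p + b ^ p) := by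
  wlog hab : a ≤ b generalizing a b
  · rw [add_comm a, add_comm (a ^ p)]
    exact this hb ha (le_of_not_ge hab)
  calc (a + b) ^ p ≤ (2 * b) ^ p := by gcongr; linarith
    _ = 2 ^ p * b ^ p := Real.mul_rpow zero_le_two hb
    _ ≤ 2 ^ p * (a ^ p + b ^ p) := by gcongr; linarith [Real.rpow_nonneg ha p]

lemma exists_mul_rpow_le_mul_rpow_add (K : ℝ) {c p q : ℝ} (hc : 0 < c) (hpq : p < q) :
    ∃ D, ∀ a : ℝ, 1 ≤ a → K * a ^ p ≤ c * a ^ q + D := by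
  set R := max 1 ((|K| / c) ^ (q - p)⁻¹)
  refine ⟨|K| * R ^ |p|, fun a ha => ?_⟩
  have ha₀ : 0 < a := by linarith
  rcases le_total a R with haR | hRa
  · calc K * a ^ p ≤ |K| * a ^ |p| :=
          mul_le_mul (le_abs_self K) (Real.rpow_le_rpow_of_exponent_le ha (le_abs_self p))
            (by positivity) (abs_nonneg K)
      _ ≤ |K| * R ^ |p| := by gcongr
      _ ≤ c * a ^ q + |K| * R ^ |p| := le_add_of_nonneg_left (by positivity)
  · have hK : |K| / c ≤ a ^ (q - p) :=
      calc |K| / c = ((|K| / c) ^ (q - p)⁻¹) ^ (q - p) := by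
            rw [← Real.rpow_mul (by positivity), inv_mul_cancel₀ (by linarith), Real.rpow_one]
        _ ≤ a ^ (q - p) := by gcongr; exact (le_max_right _ _).trans hRa
    rw [div_le_iff₀' hc] at hK
    calc K * a ^ p ≤ |K| * a ^ p := by gcongr; exact le_abs_self K
      _ ≤ c * a ^ (q - p) * a ^ p := by gcongr
      _ = c * a ^ q := by rw [mul_assoc, ← Real.rpow_add ha₀, sub_add_cancel]
      _ ≤ c * a ^ q + |K| * R ^ |p| := le_add_of_nonneg_right (by positivity)

lemma exists_pos_mul_sum_le_sum_mul {ι : Type*} [Fintype ι] (a : ι → ℝ) (ha : ∀ i, 0 < a i) :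
    ∃ c > 0, ∀ x : ι → ℝ, (∀ i, 0 ≤ x i) → c * ∑ i, x i ≤ ∑ i, a i * x i := by
  have hS : 0 ≤ ∑ i, (a i)⁻¹ := Finset.sum_nonneg fun i _ => (inv_pos.mpr (ha i)).le
  refine ⟨(1 + ∑ i, (a i)⁻¹)⁻¹, by positivity, fun x hx => ?_⟩
  rw [Finset.mul_sum]
  gcongr with i
  · exact hx i
  refine inv_le_of_inv_le₀ (ha i) ?_
  linarith [Finset.single_le_sum (fun j _ => (inv_pos.mpr (ha j)).le) (Finset.mem_univ i)]

lemma exists_neg_le_of_abs_le_mul_jap_sub_rpow {κ : Type} [Fintype κ] (CW : ℝ)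
    {p q₁ q₂ c₁ c₂ : ℝ} (hc₁ : 0 < c₁) (hc₂ : 0 < c₂) (hq₁ : 0 < q₁) (hq₂ : 0 < q₂)
    (hpq₁ : p < q₁) (hpq₂ : p < q₂) :
    ∃ D, ∀ (w : ℝ) (x y : EuclideanSpace ℝ κ), |w| ≤ CW * jap (x - y) ^ p →
      -(c₁ * jap x ^ q₁ + c₂ * jap y ^ q₂) - D ≤ w := by
  -- rounding `p` up to `p' ≥ 0` makes `(a + b) ^ p' ≤ 2 ^ p' * (a ^ p' + b ^ p')` available
  set p' := max p 0
  set K := max CW 0 * 2 ^ p'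
  obtain ⟨D₁, hD₁⟩ := exists_mul_rpow_le_mul_rpow_add K hc₁ (max_lt hpq₁ hq₁)
  obtain ⟨D₂, hD₂⟩ := exists_mul_rpow_le_mul_rpow_add K hc₂ (max_lt hpq₂ hq₂)
  refine ⟨D₁ + D₂, fun w x y hw => ?_⟩
  have hw' : |w| ≤ K * jap x ^ p' + K * jap y ^ p' :=
    calc |w| ≤ CW * jap (x - y) ^ p := hw
      _ ≤ max CW 0 * jap (x - y) ^ p' :=
          mul_le_mul (le_max_left _ _) (Real.rpow_le_rpow_of_exponent_le (one_le_jap _)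
            (le_max_left _ _)) (Real.rpow_nonneg (jap_nonneg _) _) (le_max_right _ _)
      _ ≤ max CW 0 * (jap x + jap y) ^ p' := by
          gcongr
          · exact jap_nonneg _
          · exact jap_sub_le x y
      _ ≤ max CW 0 * (2 ^ p' * (jap x ^ p' + jap y ^ p')) := by
          gcongr
          exact Real.add_rpow_le_two_rpow_mul_rpow_add_rpow (jap_nonneg x) (jap_nonneg y)
            (le_max_right _ _)
      _ = K * jap x ^ p' + K * jap y ^ p' := by ring
  linarith [neg_abs_le w, hD₁ _ (one_le_jap x), hD₂ _ (one_le_jap y)]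

lemma exists_hk_lower_bound (d : ℕ) {m C₀ M δ : ℝ} (hm : 0 < m) (hC₀ : 0 < C₀) (hδ : 0 < δ)
    (C₁ CA : ℝ) :
    ∃ D, ∀ (V : ℝ → Ed d → ℝ) (A : ℝ → Ed d → Fin d → ℝ) (t : ℝ) (x ξ : Ed d),
      C₀ * jap x ^ (2 * (M + 1)) - C₁ ≤ V t x → (∀ j, |A t x j| ≤ CA * jap x ^ (M + 1 - δ)) →
      1 / (4 * m) * ‖ξ‖ ^ 2 + C₀ / 2 * jap x ^ (2 * (M + 1)) - D ≤ hk m V A t x ξ := by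
  obtain ⟨D, hD⟩ := exists_mul_rpow_le_mul_rpow_add (1 / (2 * m) * (d * CA ^ 2)) (half_pos hC₀)
    (show 2 * (M + 1 - δ) < 2 * (M + 1) by linarith)
  refine ⟨D + C₁, fun V A t x ξ hV hA => ?_⟩
  have hA_sq : ∑ j, A t x j ^ 2 ≤ d * CA ^ 2 * jap x ^ (2 * (M + 1 - δ)) :=
    calc ∑ j, A t x j ^ 2 ≤ ∑ _j : Fin d, CA ^ 2 * jap x ^ (2 * (M + 1 - δ)) := by
          gcongr with j
          rw [← sq_abs, ← jap_rpow_sq, ← mul_pow]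
          exact pow_le_pow_left₀ (abs_nonneg _) (hA j) 2
      _ = d * CA ^ 2 * jap x ^ (2 * (M + 1 - δ)) := by simp [mul_assoc]
  have hkin : ‖ξ‖ ^ 2 ≤ 2 * ∑ j, (ξ j - A t x j) ^ 2 + 2 * ∑ j, A t x j ^ 2 := by
    rw [EuclideanSpace.real_norm_sq_eq, Finset.mul_sum, Finset.mul_sum, ← Finset.sum_add_distrib]
    gcongr with j
    nlinarith [sq_nonneg (ξ j - 2 * A t x j)]
  have habsorb := hD _ (one_le_jap x)
  have h2m : 0 < 1 / (2 * m) := by positivity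
  have h4m : 1 / (4 * m) = 1 / (2 * m) / 2 := by field_simp; ring
  unfold hk
  rw [h4m]
  linarith [mul_le_mul_of_nonneg_left hkin h2m.le, mul_le_mul_of_nonneg_left hA_sq h2m.le]

def PhiSumSq {d : ℕ} (M1 M2 : ℝ) (z : E4 d) : ℝ :=
  jap (comp4 0 z) ^ (2 * (M1 + 1)) + jap (comp4 1 z) ^ (2 * (M2 + 1))
  + jap (comp4 2 z) ^ 2 + jap (comp4 3 z) ^ 2

lemma Phi_sq_le_four_mul_PhiSumSq {d : ℕ} (M1 M2 : ℝ) (z : E4 d) :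
    Phi M1 M2 z ^ 2 ≤ 4 * PhiSumSq M1 M2 z := by
  rw [Phi, PhiSumSq, ← jap_rpow_sq, ← jap_rpow_sq]
  set a := jap (comp4 0 z) ^ (M1 + 1)
  set b := jap (comp4 1 z) ^ (M2 + 1)
  nlinarith [sq_nonneg (a - b), sq_nonneg (a - jap (comp4 2 z)), sq_nonneg (a - jap (comp4 3 z)),
    sq_nonneg (b - jap (comp4 2 z)), sq_nonneg (b - jap (comp4 3 z)),
    sq_nonneg (jap (comp4 2 z) - jap (comp4 3 z))]

lemma norm_sq_eq_sum_norm_sq_comp4 {d : ℕ} (ζ : E4 d) : ‖ζ‖ ^ 2 = ∑ k, ‖comp4 k ζ‖ ^ 2 := by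
  simp only [EuclideanSpace.real_norm_sq_eq, Fintype.sum_prod_type]
  rfl

lemma re_htilS {d : ℕ} (m : Fin 4 → ℝ) (V : Fin 4 → ℝ → Ed d → ℝ)
    (A : Fin 4 → ℝ → Ed d → Fin d → ℝ) (W12 : ℝ → Ed d → ℝ) (t : ℝ) (z ζ : E4 d) :
    (htilS m V A W12 t z ζ).re = htil m V A W12 t z ζ := by
  simp [htilS]

lemma exists_htil_lower_bound {d : ℕ} {s : Set ℝ} {M₁ M₂ : ℝ} (hM₁ : 0 ≤ M₁) (hM₂ : 0 ≤ M₂)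
    {m : Fin 4 → ℝ} (hm : ∀ k, 0 < m k) {V : Fin 4 → ℝ → Ed d → ℝ}
    {A : Fin 4 → ℝ → Ed d → Fin d → ℝ} {W12 : ℝ → Ed d → ℝ}
    {C₀ C₀' C₁ C₁' δ₀ δ₁ δW CA₀ CA₁ CW : ℝ} (hC₀ : 0 < C₀) (hC₀' : 0 < C₀')
    (hδ₀ : 0 < δ₀) (hδ₁ : 0 < δ₁) (hδW : 0 < δW)
    (hV₀ : ∀ t ∈ s, ∀ x, C₀ * jap x ^ (2 * (M₁ + 1)) - C₁ ≤ V 0 t x)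
    (hV₁ : ∀ t ∈ s, ∀ x, C₀' * jap x ^ (2 * (M₂ + 1)) - C₁' ≤ V 1 t x)
    (hA₀ : ∀ t ∈ s, ∀ x j, |A 0 t x j| ≤ CA₀ * jap x ^ (M₁ + 1 - δ₀))
    (hA₁ : ∀ t ∈ s, ∀ x j, |A 1 t x j| ≤ CA₁ * jap x ^ (M₂ + 1 - δ₁))
    (hW : ∀ t ∈ s, ∀ x, |W12 t x| ≤ CW * jap x ^ (2 * (min M₁ M₂ + 1) - δW)) :
    ∃ c > 0, ∃ D, ∀ t ∈ s, ∀ z ζ : E4 d,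
      c * (‖ζ‖ ^ 2 + PhiSumSq M₁ M₂ z) - D ≤ htil m V A W12 t z ζ := by
  obtain ⟨D₀, hD₀⟩ := exists_hk_lower_bound d (M := M₁) (hm 0) hC₀ hδ₀ C₁ CA₀
  obtain ⟨D₁, hD₁⟩ := exists_hk_lower_bound d (M := M₂) (hm 1) hC₀' hδ₁ C₁' CA₁
  -- each `hk` keeps half of its confinement; the interaction is charged half of that
  obtain ⟨DW, hDW⟩ := exists_neg_le_of_abs_le_mul_jap_sub_rpow (κ := Fin d) CW
    (p := 2 * (min M₁ M₂ + 1) - δW) (q₁ := 2 * (M₁ + 1)) (q₂ := 2 * (M₂ + 1))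
    (c₁ := C₀ / 4) (c₂ := C₀' / 4) (by positivity) (by positivity) (by linarith) (by linarith)
    (by linarith [min_le_left M₁ M₂]) (by linarith [min_le_right M₁ M₂])
  obtain ⟨c, hc, hcoef⟩ := exists_pos_mul_sum_le_sum_mul
    ![1 / (4 * m 0), 1 / (4 * m 1), 1 / (2 * m 2), 1 / (2 * m 3), C₀ / 4, C₀' / 4, 1, 1]
    (by intro i; fin_cases i <;> simp [hm, hC₀, hC₀'])
  refine ⟨c, hc, D₀ + D₁ + DW, fun t ht z ζ => ?_⟩
  have hsum := hcoef ![‖comp4 0 ζ‖ ^ 2, ‖comp4 1 ζ‖ ^ 2, ‖comp4 2 ζ‖ ^ 2, ‖comp4 3 ζ‖ ^ 2,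
    jap (comp4 0 z) ^ (2 * (M₁ + 1)), jap (comp4 1 z) ^ (2 * (M₂ + 1)),
    jap (comp4 2 z) ^ 2, jap (comp4 3 z) ^ 2]
    (by intro i; fin_cases i <;> simp [Real.rpow_nonneg, jap_nonneg])
  simp only [Fin.sum_univ_eight, Matrix.cons_val] at hsum
  have h₀ := hD₀ (V 0) (A 0) t _ (comp4 0 ζ) (hV₀ t ht (comp4 0 z)) (hA₀ t ht _)
  have h₁ := hD₁ (V 1) (A 1) t _ (comp4 1 ζ) (hV₁ t ht (comp4 1 z)) (hA₁ t ht _)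
  have hW' := hDW _ _ _ (hW t ht (comp4 0 z - comp4 1 z))
  rw [norm_sq_eq_sum_norm_sq_comp4, Fin.sum_univ_four, PhiSumSq, htil, lk, lk]
  linarith

theorem htilde_lower_bound_general
    (d : ℕ) (T : ℝ)
    (m : Fin 4 → ℝ) (hm : ∀ k, 0 < m k)
    (M1 M2 : ℝ) (hM1 : 0 ≤ M1) (hM2 : 0 ≤ M2)
    (V : Fin 4 → ℝ → Ed d → ℝ) (A : Fin 4 → ℝ → Ed d → Fin d → ℝ)
    (W12 : ℝ → Ed d → ℝ)
    (hgrow : ∀ k : Fin 4, (k:ℕ) < 2 → ∃ C0 > (0:ℝ), ∃ C1 ≥ (0:ℝ), ∃ C2 > (0:ℝ),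
      ∀ t ∈ Icc (0:ℝ) T, ∀ x,
      C0 * jap x ^ (2*(Mk M1 M2 k + 1)) - C1 ≤ V k t x ∧
      V k t x ≤ C2 * jap x ^ (2*(Mk M1 M2 k + 1)))
    (hA : ∀ k : Fin 4, (k:ℕ) < 2 → ∃ δ > (0:ℝ), ∃ C : ℝ,
      ∀ t ∈ Icc (0:ℝ) T, ∀ x j, |A k t x j| ≤ C * jap x ^ (Mk M1 M2 k + 1 - δ))
    (hW : ∃ δ > (0:ℝ), ∃ C : ℝ, ∀ t ∈ Icc (0:ℝ) T, ∀ x,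
      |W12 t x| ≤ C * jap x ^ (2*(min M1 M2 + 1) - δ)) :
    ∃ μs ≥ (0:ℝ), ∃ C0s > (0:ℝ), ∀ t ∈ Icc (0:ℝ) T, ∀ z ζ : E4 d,
      C0s * (jap ζ ^ (2:ℝ) + Phi M1 M2 z ^ 2) ≤ μs + (htilS m V A W12 t z ζ).re := by
  obtain ⟨C₀, hC₀, C₁, -, _, -, hV₀⟩ := hgrow 0 (by decide)
  obtain ⟨C₀', hC₀', C₁', -, _, -, hV₁⟩ := hgrow 1 (by decide)
  obtain ⟨δ₀, hδ₀, CA₀, hA₀⟩ := hA 0 (by decide)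
  obtain ⟨δ₁, hδ₁, CA₁, hA₁⟩ := hA 1 (by decide)
  obtain ⟨δW, hδW, CW, hW⟩ := hW
  obtain ⟨c, hc, D, hD⟩ := exists_htil_lower_bound hM1 hM2 hm hC₀ hC₀' hδ₀ hδ₁ hδW
    (fun t ht x => (hV₀ t ht x).1) (fun t ht x => (hV₁ t ht x).1) hA₀ hA₁ hW
  refine ⟨|c / 4 + D|, abs_nonneg _, c / 4, by positivity, fun t ht z ζ => ?_⟩
  rw [re_htilS, Real.rpow_two, jap_sq]
  linarith [hD t ht z ζ, le_abs_self (c / 4 + D), mul_nonneg hc.le (sq_nonneg ‖ζ‖),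
    mul_le_mul_of_nonneg_left (Phi_sq_le_four_mul_PhiSumSq M1 M2 z) hc.le]

/-- The lower bound (5.5-2) of Lemma 5.1:
`μ* + Re h̃_s(t,z,ζ) ≥ C₀*(⟨ζ⟩² + Φ(z)²)`. -/
theorem htilde_lower_bound
    (d : ℕ) (hd : 0 < d) (T : ℝ) (hT : 0 < T)
    (m : Fin 4 → ℝ) (hm : ∀ k, 0 < m k)
    (M1 M2 : ℝ) (hM1 : 0 ≤ M1) (hM2 : 0 ≤ M2)
    (V : Fin 4 → ℝ → Ed d → ℝ) (A : Fin 4 → ℝ → Ed d → Fin d → ℝ)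
    (W12 : ℝ → Ed d → ℝ)
    (hgrow : ∀ k : Fin 4, (k:ℕ) < 2 → ∃ C0 > (0:ℝ), ∃ C1 ≥ (0:ℝ), ∃ C2 > (0:ℝ),
      ∀ t ∈ Icc (0:ℝ) T, ∀ x,
      C0 * jap x ^ (2*(Mk M1 M2 k + 1)) - C1 ≤ V k t x ∧
      V k t x ≤ C2 * jap x ^ (2*(Mk M1 M2 k + 1)))
    (hdV : ∀ k : Fin 4, (k:ℕ) < 2 → ∀ α : Fin d → ℕ, 1 ≤ mdeg α →
      ∃ C : ℝ, ∀ t ∈ Icc (0:ℝ) T, ∀ x,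
      |mpd α (V k t) x| ≤ C * jap x ^ (2*(Mk M1 M2 k + 1)))
    (hA : ∀ k : Fin 4, (k:ℕ) < 2 → ∃ δ > (0:ℝ), ∃ C : ℝ,
      ∀ t ∈ Icc (0:ℝ) T, ∀ x j, |A k t x j| ≤ C * jap x ^ (Mk M1 M2 k + 1 - δ))
    (hdA : ∀ k : Fin 4, (k:ℕ) < 2 → ∀ α : Fin d → ℕ, 1 ≤ mdeg α →
      ∃ C : ℝ, ∀ t ∈ Icc (0:ℝ) T, ∀ x j,
      |mpd α (fun y => A k t y j) x| ≤ C * jap x ^ (Mk M1 M2 k + 1))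
    (hW : ∃ δ > (0:ℝ), ∃ C : ℝ, ∀ t ∈ Icc (0:ℝ) T, ∀ x,
      |W12 t x| ≤ C * jap x ^ (2*(min M1 M2 + 1) - δ))
    (hdW : ∀ α : Fin d → ℕ, 1 ≤ mdeg α → ∃ C : ℝ, ∀ t ∈ Icc (0:ℝ) T, ∀ x,
      |mpd α (W12 t) x| ≤ C * jap x ^ (2*(min M1 M2 + 1))) :
    ∃ μs ≥ (0:ℝ), ∃ C0s > (0:ℝ), ∀ t ∈ Icc (0:ℝ) T, ∀ z ζ : E4 d,
      C0s * (jap ζ ^ (2:ℝ) + Phi M1 M2 z ^ 2) ≤ μs + (htilS m V A W12 t z ζ).re :=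
  htilde_lower_bound_general d T m hm M1 M2 hM1 hM2 V A W12 hgrow hA hW

end Schro
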